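/- Let n ≥ 1, I ⊆ [n-1], and A ∈ ASM^I(n) with rank matrix entries a_{i,j} = r_A(i,j). Then A = ⋁_{i,j ∈ [n]} (the permutation matrix of P[i,j,a_{i,j}]^I), where the join is taken in the lattice ASM(n) (equivalently in ASM^I(n)), and A = ⋀_{i,j ∈ [n]} (the permutation matrix of Q[i,j,a_{i,j}]^I), where the meet is taken in the lattice ASM^I(n). -/
import Mathlib


/-- The rank (corner sum) matrix entry `r_A(i,j)` (1-based `i j`, zero when `i = 0` or `j = 0`). -/
def rk (n : ℕ) (A : Matrix (Fin n) (Fin n) ℤ) (i j : ℕ) : ℤ :=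
  ∑ p : Fin n, ∑ q : Fin n, if p.1 < i ∧ q.1 < j then A p q else 0

/-- `A` is an alternating sign matrix: entries in `{-1,0,1}`, the nonzero entries of each row
and column alternate in sign and sum to `1`; equivalently all partial row and column sums are
`0` or `1` and every full row and column sums to `1`. -/
def IsASM (n : ℕ) (A : Matrix (Fin n) (Fin n) ℤ) : Prop :=
  (∀ i j, A i j = -1 ∨ A i j = 0 ∨ A i j = 1) ∧
  (∀ i : Fin n, ∀ j : ℕ, j ≤ n →
      (∑ q : Fin n, if q.1 < j then A i q else 0) = 0 ∨
      (∑ q : Fin n, if q.1 < j then A i q else 0) = 1) ∧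
  (∀ j : Fin n, ∀ i : ℕ, i ≤ n →
      (∑ p : Fin n, if p.1 < i then A p j else 0) = 0 ∨
      (∑ p : Fin n, if p.1 < i then A p j else 0) = 1) ∧
  (∀ i : Fin n, (∑ q : Fin n, A i q) = 1) ∧
  (∀ j : Fin n, (∑ p : Fin n, A p j) = 1)

/-- `A ∈ ASM^I(n)`: `A` is an ASM and for every `i ∈ I` and `j ∈ [n]`,
`r_A(i,j) = r_A(i-1,j) + 1` or `r_A(i,j) = r_A(i+1,j)`. -/
def InASMI (n : ℕ) (I : Finset ℕ) (A : Matrix (Fin n) (Fin n) ℤ) : Prop :=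
  IsASM n A ∧ ∀ i ∈ I, ∀ j, 1 ≤ j → j ≤ n →
    rk n A i j = rk n A (i - 1) j + 1 ∨ rk n A i j = rk n A (i + 1) j

/-- Bruhat order on `ASM(n)`: `A ≤ B` iff `r_A(i,j) ≥ r_B(i,j)` for all `i,j ∈ [n]`. -/
def blE (n : ℕ) (A B : Matrix (Fin n) (Fin n) ℤ) : Prop :=
  ∀ i j, 1 ≤ i → i ≤ n → 1 ≤ j → j ≤ n → rk n B i j ≤ rk n A i j

/-- Permutation matrix of `w`. -/
def permMatrix (n : ℕ) (w : Equiv.Perm (Fin n)) : Matrix (Fin n) (Fin n) ℤ :=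
  Matrix.of fun i j => if w i = j then 1 else 0

/-- `w ∈ S_n^I`: `w(i) < w(i+1)` for all `i ∈ I` (indices 1-based). -/
def IsMinRep (n : ℕ) (I : Finset ℕ) (w : Equiv.Perm (Fin n)) : Prop :=
  ∀ p q : Fin n, (p.1 + 1) ∈ I → q.1 = p.1 + 1 → w p < w q

/-- Identity matrix. -/
def idMat (n : ℕ) : Matrix (Fin n) (Fin n) ℤ :=
  Matrix.of fun i j => if i = j then 1 else 0

/-- The parabolic subgroup `S_n(I)`, generated by the adjacent transpositions `s_i`, `i ∈ I`. -/
def SnI (n : ℕ) (I : Finset ℕ) : Subgroup (Equiv.Perm (Fin n)) :=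
  Subgroup.closure
    {σ | ∃ p q : Fin n, (p.1 + 1) ∈ I ∧ q.1 = p.1 + 1 ∧ σ = Equiv.swap p q}

namespace StmtAux

variable {n : ℕ}

lemma sum_lt_succ (f : Fin n → ℤ) (i : ℕ) (hi : i < n) :
    (∑ p : Fin n, if p.1 < i + 1 then f p else 0)
      = (∑ p : Fin n, if p.1 < i then f p else 0) + f ⟨i, hi⟩ := by
  have h : ∀ p : Fin n, (if p.1 < i + 1 then f p else 0)
      = (if p.1 < i then f p else 0) + (if p = ⟨i, hi⟩ then f p else 0) := by
    intro p
    by_cases h1 : p = ⟨i, hi⟩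
    · subst h1; simp
    · have h2 : p.1 ≠ i := fun h => h1 (Fin.ext h)
      by_cases h3 : p.1 < i
      · rw [if_pos (by omega), if_pos h3, if_neg h1, add_zero]
      · rw [if_neg (by omega), if_neg h3, if_neg h1, add_zero]
  rw [Finset.sum_congr rfl (fun p _ => h p), Finset.sum_add_distrib]
  congr 1
  rw [Finset.sum_ite_eq' Finset.univ (⟨i, hi⟩ : Fin n) f]
  simp

lemma rk_eq_rowsum (A : Matrix (Fin n) (Fin n) ℤ) (i j : ℕ) :
    rk n A i j = ∑ p : Fin n, if p.1 < i then (∑ q : Fin n, if q.1 < j then A p q else 0) else 0 := by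
  unfold rk
  refine Finset.sum_congr rfl fun p _ => ?_
  by_cases h : p.1 < i
  · simp [h]
  · simp [h]

lemma rk_eq_colsum (A : Matrix (Fin n) (Fin n) ℤ) (i j : ℕ) :
    rk n A i j = ∑ q : Fin n, if q.1 < j then (∑ p : Fin n, if p.1 < i then A p q else 0) else 0 := by
  unfold rk
  rw [Finset.sum_comm]
  refine Finset.sum_congr rfl fun q _ => ?_
  by_cases h : q.1 < j
  · simp [h, and_comm]
  · simp [h]

lemma rk_zero_row (A : Matrix (Fin n) (Fin n) ℤ) (j : ℕ) : rk n A 0 j = 0 := by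
  unfold rk; simp

lemma rk_succ_row (A : Matrix (Fin n) (Fin n) ℤ) {i : ℕ} (hi : i < n) (j : ℕ) :
    rk n A (i + 1) j = rk n A i j + (∑ q : Fin n, if q.1 < j then A ⟨i, hi⟩ q else 0) := by
  rw [rk_eq_rowsum, rk_eq_rowsum, sum_lt_succ (fun p => ∑ q : Fin n, if q.1 < j then A p q else 0) i hi]

lemma rk_succ_col (A : Matrix (Fin n) (Fin n) ℤ) {j : ℕ} (hj : j < n) (i : ℕ) :
    rk n A i (j + 1) = rk n A i j + (∑ p : Fin n, if p.1 < i then A p ⟨j, hj⟩ else 0) := by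
  rw [rk_eq_colsum, rk_eq_colsum, sum_lt_succ (fun q => ∑ p : Fin n, if p.1 < i then A p q else 0) j hj]

lemma rkA_row (A : Matrix (Fin n) (Fin n) ℤ) (hA : IsASM n A) {a i j : ℕ}
    (hai : a ≤ i) (hi : i ≤ n) (hj : j ≤ n) :
    rk n A a j ≤ rk n A i j ∧ rk n A i j ≤ rk n A a j + ((i : ℤ) - a) := by
  induction i, hai using Nat.le_induction with
  | base => simp
  | succ m hm ih =>
    have hm' : m < n := by omega
    obtain ⟨ih1, ih2⟩ := ih (by omega)
    have hs := rk_succ_row A hm' j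
    rcases hA.2.1 ⟨m, hm'⟩ j hj with h | h <;> rw [h] at hs <;>
      constructor <;> push_cast <;> omega

lemma rkA_col (A : Matrix (Fin n) (Fin n) ℤ) (hA : IsASM n A) {i b j : ℕ}
    (hbj : b ≤ j) (hj : j ≤ n) (hi : i ≤ n) :
    rk n A i b ≤ rk n A i j ∧ rk n A i j ≤ rk n A i b + ((j : ℤ) - b) := by
  induction j, hbj using Nat.le_induction with
  | base => simp
  | succ m hm ih =>
    have hm' : m < n := by omega
    obtain ⟨ih1, ih2⟩ := ih (by omega)
    have hs := rk_succ_col A hm' i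
    rcases hA.2.2.1 ⟨m, hm'⟩ i hi with h | h <;> rw [h] at hs <;>
      constructor <;> push_cast <;> omega

lemma rkA_nonneg (A : Matrix (Fin n) (Fin n) ℤ) (hA : IsASM n A) {i j : ℕ}
    (hi : i ≤ n) (hj : j ≤ n) : 0 ≤ rk n A i j := by
  have := (rkA_row A hA (Nat.zero_le i) hi hj).1
  rwa [rk_zero_row] at this

lemma rkA_le_left (A : Matrix (Fin n) (Fin n) ℤ) (hA : IsASM n A) {i j : ℕ}
    (hi : i ≤ n) (hj : j ≤ n) : rk n A i j ≤ i := by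
  have := (rkA_row A hA (Nat.zero_le i) hi hj).2
  rw [rk_zero_row] at this; omega

lemma rkA_le_right (A : Matrix (Fin n) (Fin n) ℤ) (hA : IsASM n A) {i j : ℕ}
    (hi : i ≤ n) (hj : j ≤ n) : rk n A i j ≤ j := by
  have h0 : rk n A i 0 = 0 := by
    rw [rk_eq_colsum]; simp
  have := (rkA_col A hA (Nat.zero_le j) hj hi).2
  rw [h0] at this; omega

lemma cnt_one (j : ℕ) (hj : j ≤ n) :
    (∑ q : Fin n, if q.1 < j then (1 : ℤ) else 0) = j := by
  induction j with
  | zero => simp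
  | succ m ih =>
    rw [sum_lt_succ (fun _ => (1:ℤ)) m (by omega)]
    rw [ih (by omega)]; push_cast; ring

lemma rkA_full_row (A : Matrix (Fin n) (Fin n) ℤ) (hA : IsASM n A) {j : ℕ} (hj : j ≤ n) :
    rk n A n j = j := by
  rw [rk_eq_colsum]
  have h : ∀ q : Fin n, (∑ p : Fin n, if p.1 < n then A p q else 0) = 1 := by
    intro q
    rw [Finset.sum_congr rfl fun p _ => if_pos p.2]
    exact hA.2.2.2.2 q
  rw [Finset.sum_congr rfl fun q _ => by rw [h q]]
  exact cnt_one j hj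

lemma rkA_ge (A : Matrix (Fin n) (Fin n) ℤ) (hA : IsASM n A) {i j : ℕ}
    (hi : i ≤ n) (hj : j ≤ n) : (i : ℤ) + j - n ≤ rk n A i j := by
  have h1 := (rkA_row A hA hi (le_refl n) hj).2
  rw [rkA_full_row A hA hj] at h1
  omega

lemma rowsum_perm (w : Equiv.Perm (Fin n)) (p : Fin n) (j : ℕ) :
    (∑ q : Fin n, if q.1 < j then permMatrix n w p q else 0)
      = if (w p).1 < j then 1 else 0 := by
  have h : ∀ q : Fin n, (if q.1 < j then permMatrix n w p q else 0)
      = if q = w p then (if q.1 < j then (1:ℤ) else 0) else 0 := by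
    intro q
    simp only [permMatrix, Matrix.of_apply]
    by_cases h1 : q = w p
    · subst h1; simp
    · have h2 : ¬ (w p = q) := fun h => h1 h.symm
      simp [h1, h2]
  rw [Finset.sum_congr rfl fun q _ => h q, Finset.sum_ite_eq' Finset.univ (w p) _]
  simp

lemma rk_perm_succ (w : Equiv.Perm (Fin n)) {i : ℕ} (hi : i < n) (j : ℕ) :
    rk n (permMatrix n w) (i + 1) j
      = rk n (permMatrix n w) i j + (if (w ⟨i, hi⟩).1 < j then 1 else 0) := by
  rw [rk_succ_row _ hi, rowsum_perm]

lemma rk_perm_bounds (w : Equiv.Perm (Fin n)) {a i : ℕ} (j : ℕ) (hai : a ≤ i) (hi : i ≤ n) :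
    rk n (permMatrix n w) a j ≤ rk n (permMatrix n w) i j ∧
      rk n (permMatrix n w) i j ≤ rk n (permMatrix n w) a j + ((i : ℤ) - a) := by
  induction i, hai using Nat.le_induction with
  | base => simp
  | succ m hm ih =>
    have hm' : m < n := by omega
    obtain ⟨ih1, ih2⟩ := ih (by omega)
    have hs := rk_perm_succ w hm' j
    constructor <;> (split_ifs at hs <;> push_cast <;> omega)

lemma rk_perm_reindex (w v : Equiv.Perm (Fin n)) (i j : ℕ)
    (hv : ∀ p : Fin n, (v p).1 < i ↔ p.1 < i) :
    rk n (permMatrix n (w * v)) i j = rk n (permMatrix n w) i j := by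
  rw [rk_eq_rowsum, rk_eq_rowsum]
  have h : ∀ p : Fin n,
      (if p.1 < i then (∑ q : Fin n, if q.1 < j then permMatrix n (w * v) p q else 0) else 0)
        = (fun x : Fin n => if x.1 < i then (if (w x).1 < j then (1:ℤ) else 0) else 0) (v p) := by
    intro p
    rw [rowsum_perm]
    simp only [Equiv.Perm.mul_apply]
    exact (if_congr (hv p) rfl rfl).symm
  rw [Finset.sum_congr rfl fun p _ => h p,
    Fintype.sum_bijective v v.bijective _
      (fun x : Fin n => if x.1 < i then (if (w x).1 < j then (1:ℤ) else 0) else 0)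
      (fun p => rfl)]
  refine Finset.sum_congr rfl fun p _ => ?_
  by_cases hp : p.1 < i
  · rw [if_pos hp, if_pos hp, rowsum_perm]
  · rw [if_neg hp, if_neg hp]

lemma snI_preserve {I : Finset ℕ} (v : Equiv.Perm (Fin n)) (hv : v ∈ SnI n I)
    {i : ℕ} (hiI : i ∉ I) : ∀ p : Fin n, (v p).1 < i ↔ p.1 < i := by
  unfold SnI at hv
  induction hv using Subgroup.closure_induction with
  | mem x hx =>
    obtain ⟨p₀, q₀, hmem, hq, rfl⟩ := hx
    intro p
    have hne : i ≠ p₀.1 + 1 := fun h => hiI (h ▸ hmem)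
    rcases eq_or_ne p p₀ with rfl | h1
    · rw [Equiv.swap_apply_left]; omega
    rcases eq_or_ne p q₀ with rfl | h2
    · rw [Equiv.swap_apply_right]; omega
    · rw [Equiv.swap_apply_of_ne_of_ne h1 h2]
  | one => intro p; simp
  | mul x y hx hy ihx ihy =>
    intro p
    rw [Equiv.Perm.mul_apply, ihx (y p), ihy p]
  | inv x hx ihx =>
    intro p
    conv_rhs => rw [show p = x (x⁻¹ p) by simp]
    rw [ihx (x⁻¹ p)]

lemma minRep_cond {I : Finset ℕ} (w : Equiv.Perm (Fin n)) (hw : IsMinRep n I w)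
    {i : ℕ} (hiI : i ∈ I) (h1 : 1 ≤ i) (h2 : i < n) (j : ℕ) :
    rk n (permMatrix n w) i j = rk n (permMatrix n w) (i - 1) j + 1 ∨
      rk n (permMatrix n w) i j = rk n (permMatrix n w) (i + 1) j := by
  have hi1 : i - 1 < n := by omega
  have e : i - 1 + 1 = i := by omega
  have hpq : w ⟨i - 1, hi1⟩ < w ⟨i, h2⟩ :=
    hw ⟨i - 1, hi1⟩ ⟨i, h2⟩ (by show i - 1 + 1 ∈ I; rw [e]; exact hiI)
      (by show i = i - 1 + 1; omega)
  have e1 := rk_perm_succ w hi1 j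
  have e2 := rk_perm_succ w h2 j
  rw [show i - 1 + 1 = i by omega] at e1
  by_cases hj : (w ⟨i - 1, hi1⟩).1 < j
  · left; rw [e1, if_pos hj]
  · right
    have : ¬ ((w ⟨i, h2⟩).1 < j) := by
      have := Fin.lt_iff_val_lt_val.mp hpq
      omega
    rw [e2, if_neg this, add_zero]

/-- closed form for rank matrix of `P[a,b,c]`. -/
def gP (a b c i j : ℕ) : ℤ :=
  min (min (i : ℤ) j) ((c : ℤ) + max 0 ((i : ℤ) - a) + max 0 ((j : ℤ) - b))

/-- closed form for rank matrix of `Q[a,b,c]`. -/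
def gQ (n a b c i j : ℕ) : ℤ :=
  max 0 (max ((i : ℤ) + j - n) ((c : ℤ) - max 0 ((a : ℤ) - i) - max 0 ((b : ℤ) - j)))

lemma rk_P_eq (w : Equiv.Perm (Fin n)) (a b c : ℕ)
    (ha1 : 1 ≤ a) (ha2 : a ≤ n) (hb1 : 1 ≤ b) (hb2 : b ≤ n)
    (hc1 : c ≤ a) (hc2 : c ≤ b) (hc3 : a + b ≤ n + c)
    (hw : ∀ x : Fin n, (w x).1 + 1 =
      (if x.1 + 1 ≤ c ∨ a + b - c < x.1 + 1 then x.1 + 1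
        else if x.1 + 1 ≤ a then b - c + (x.1 + 1) else x.1 + 1 + c - a)) :
    ∀ i, i ≤ n → ∀ j, 1 ≤ j → j ≤ n → rk n (permMatrix n w) i j = gP a b c i j := by
  intro i
  induction i with
  | zero =>
    intro _ j hj1 hj2
    rw [rk_zero_row]
    simp only [gP]
    omega
  | succ m ih =>
    intro hm j hj1 hj2
    have hm' : m < n := by omega
    rw [rk_perm_succ w hm' j, ih (by omega) j hj1 hj2]
    have h := hw ⟨m, hm'⟩
    simp only [] at h
    have hiff : ((w ⟨m, hm'⟩).1 < j) ↔
        ((if m + 1 ≤ c ∨ a + b - c < m + 1 then m + 1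
          else if m + 1 ≤ a then b - c + (m + 1) else m + 1 + c - a) ≤ j) := by
      omega
    rw [if_congr hiff rfl rfl]
    simp only [gP]
    split_ifs <;> omega

lemma rk_Q_eq (w : Equiv.Perm (Fin n)) (a b c : ℕ)
    (ha1 : 1 ≤ a) (ha2 : a ≤ n) (hb1 : 1 ≤ b) (hb2 : b ≤ n)
    (hc1 : c ≤ a) (hc2 : c ≤ b) (hc3 : a + b ≤ n + c)
    (hw : ∀ x : Fin n, (w x).1 + 1 =
      (if x.1 + 1 ≤ a - c ∨ n - b + c < x.1 + 1 then n + 1 - (x.1 + 1)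
        else if x.1 + 1 ≤ a then a + b - c + 1 - (x.1 + 1) else n + c + 1 - (x.1 + 1))) :
    ∀ i, i ≤ n → ∀ j, 1 ≤ j → j ≤ n → rk n (permMatrix n w) i j = gQ n a b c i j := by
  intro i
  induction i with
  | zero =>
    intro _ j hj1 hj2
    rw [rk_zero_row]
    simp only [gQ]
    omega
  | succ m ih =>
    intro hm j hj1 hj2
    have hm' : m < n := by omega
    rw [rk_perm_succ w hm' j, ih (by omega) j hj1 hj2]
    have h := hw ⟨m, hm'⟩
    simp only [] at h
    have hiff : ((w ⟨m, hm'⟩).1 < j) ↔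
        ((if m + 1 ≤ a - c ∨ n - b + c < m + 1 then n + 1 - (m + 1)
          else if m + 1 ≤ a then a + b - c + 1 - (m + 1) else n + c + 1 - (m + 1)) ≤ j) := by
      omega
    rw [if_congr hiff rfl rfl]
    simp only [gQ]
    split_ifs <;> omega

section CharI
variable {I : Finset ℕ} (r : ℕ → ℤ)
  (hr : ∀ i ∈ I, r i = r (i - 1) + 1 ∨ r i = r (i + 1))
  (hIb : ∀ i ∈ I, 1 ≤ i ∧ i + 1 ≤ n)

include hr hIb in
lemma charDown : ∀ i, i ∈ I → r i = r (i - 1) + 1 →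
    ∃ a, a ∉ I ∧ a < i ∧ r i = r a + ((i : ℤ) - a) := by
  intro i
  induction i using Nat.strong_induction_on with
  | _ i ih =>
    intro hiI hri
    have h1 : 1 ≤ i := (hIb i hiI).1
    by_cases h : i - 1 ∈ I
    · rcases hr (i - 1) h with h2 | h2
      · obtain ⟨a, haI, hai, hra⟩ := ih (i - 1) (by omega) h h2
        exact ⟨a, haI, by omega, by omega⟩
      · rw [show i - 1 + 1 = i by omega] at h2
        omega
    · exact ⟨i - 1, h, by omega, by rw [hri]; omega⟩

include hr hIb in
lemma charUp : ∀ k i, n - i ≤ k → i ∈ I → r i = r (i + 1) →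
    ∃ a, a ∉ I ∧ i < a ∧ a ≤ n ∧ r i = r a := by
  intro k
  induction k with
  | zero => intro i hk hiI _; have := hIb i hiI; omega
  | succ k ih =>
    intro i hk hiI hri
    have hb := hIb i hiI
    by_cases h : i + 1 ∈ I
    · rcases hr (i + 1) h with h2 | h2
      · rw [show i + 1 - 1 = i by omega] at h2
        omega
      · have hb2 := hIb (i + 1) h
        obtain ⟨a, haI, hai, han, hra⟩ := ih (i + 1) (by omega) h h2
        exact ⟨a, haI, by omega, han, by omega⟩
    · exact ⟨i + 1, h, by omega, by omega, hri⟩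

include hr hIb in
lemma charI : ∀ i ∈ I, ∃ a, a ∉ I ∧ a ≤ n ∧
    ((a < i ∧ r i = r a + ((i : ℤ) - a)) ∨ (i < a ∧ r i = r a)) := by
  intro i hiI
  have hb := hIb i hiI
  rcases hr i hiI with h | h
  · obtain ⟨a, haI, hai, hra⟩ := charDown r hr hIb i hiI h
    exact ⟨a, haI, by omega, Or.inl ⟨hai, hra⟩⟩
  · obtain ⟨a, haI, hai, han, hra⟩ := charUp r hr hIb n i (by omega) hiI h
    exact ⟨a, haI, han, Or.inr ⟨hai, hra⟩⟩

end CharI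

lemma L1 (A : Matrix (Fin n) (Fin n) ℤ) (hA : IsASM n A) (a b : ℕ)
    (ha2 : a ≤ n) (hb2 : b ≤ n) {i j : ℕ} (hi : i ≤ n) (hj : j ≤ n) :
    rk n A i j ≤ gP a b (rk n A a b).toNat i j ∧
      gQ n a b (rk n A a b).toNat i j ≤ rk n A i j := by
  have hia : min i a ≤ n := by omega
  have hjb : min j b ≤ n := by omega
  have h1 := (rkA_row A hA (min_le_left i a) hi hj).2
  have h2 := (rkA_col A hA (min_le_left j b) hj hia).2
  have h3a := (rkA_row A hA (min_le_right i a) ha2 hjb).1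
  have h3b := (rkA_col A hA (min_le_right j b) hb2 ha2).1
  have h4 := (rkA_row A hA (min_le_right i a) ha2 hb2).2
  have h5 := (rkA_col A hA (min_le_right j b) hb2 hia).2
  have h6a := (rkA_row A hA (min_le_left i a) hi hjb).1
  have h6b := (rkA_col A hA (min_le_left j b) hj hi).1
  have hle1 := rkA_le_left A hA hi hj
  have hle2 := rkA_le_right A hA hi hj
  have h0 := rkA_nonneg A hA hi hj
  have h0ab := rkA_nonneg A hA ha2 hb2
  have hgeq := rkA_ge A hA hi hj
  constructor <;> simp only [gP, gQ] <;> omega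

end StmtAux

open StmtAux

/-- For `A ∈ ASM^I(n)` with rank entries `a_{ab} = r_A(a,b)`:
`A` is the join in `ASM(n)` of the permutation matrices of the minimal representatives
`P[a,b,a_{ab}]^I` (`a, b ∈ [n]`), and the meet in `ASM^I(n)` of the permutation matrices of
the minimal representatives `Q[a,b,a_{ab}]^I`.  Here the bigrassmannian `P[a,b,c]` and its
companion `Q[a,b,c]` are specified by their one-line formulas (1-based), and `P a b`,
`Q a b` denote `P[a,b,r_A(a,b)]`, `Q[a,b,r_A(a,b)]`, with `PI a b`, `QI a b` their minimal
coset representatives modulo `S_n(I)`. -/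
theorem stmt6 (n : ℕ) (hn : 1 ≤ n) (I : Finset ℕ) (hI : I ⊆ Finset.Icc 1 (n - 1))
    (A : Matrix (Fin n) (Fin n) ℤ) (hA : InASMI n I A)
    (P Q : ℕ → ℕ → Equiv.Perm (Fin n))
    (hP : ∀ a b, 1 ≤ a → a ≤ n → 1 ≤ b → b ≤ n → ∀ x : Fin n,
      ((P a b) x).1 + 1 =
        (if x.1 + 1 ≤ (rk n A a b).toNat ∨ a + b - (rk n A a b).toNat < x.1 + 1 then
          x.1 + 1
        else if x.1 + 1 ≤ a then b - (rk n A a b).toNat + (x.1 + 1)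
        else x.1 + 1 + (rk n A a b).toNat - a))
    (hQ : ∀ a b, 1 ≤ a → a ≤ n → 1 ≤ b → b ≤ n → ∀ x : Fin n,
      ((Q a b) x).1 + 1 =
        (if x.1 + 1 ≤ a - (rk n A a b).toNat ∨ n - b + (rk n A a b).toNat < x.1 + 1 then
          n + 1 - (x.1 + 1)
        else if x.1 + 1 ≤ a then a + b - (rk n A a b).toNat + 1 - (x.1 + 1)
        else n + (rk n A a b).toNat + 1 - (x.1 + 1)))
    (PI QI : ℕ → ℕ → Equiv.Perm (Fin n))
    (hPI : ∀ a b, 1 ≤ a → a ≤ n → 1 ≤ b → b ≤ n →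
      IsMinRep n I (PI a b) ∧ ∃ v ∈ SnI n I, P a b = PI a b * v)
    (hQI : ∀ a b, 1 ≤ a → a ≤ n → 1 ≤ b → b ≤ n →
      IsMinRep n I (QI a b) ∧ ∃ v ∈ SnI n I, Q a b = QI a b * v) :
    ((∀ a b, 1 ≤ a → a ≤ n → 1 ≤ b → b ≤ n → blE n (permMatrix n (PI a b)) A) ∧
      ∀ D, IsASM n D →
        (∀ a b, 1 ≤ a → a ≤ n → 1 ≤ b → b ≤ n → blE n (permMatrix n (PI a b)) D) →
        blE n A D) ∧
    ((∀ a b, 1 ≤ a → a ≤ n → 1 ≤ b → b ≤ n → blE n A (permMatrix n (QI a b))) ∧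
      ∀ D, InASMI n I D →
        (∀ a b, 1 ≤ a → a ≤ n → 1 ≤ b → b ≤ n → blE n D (permMatrix n (QI a b))) →
        blE n D A) := by
  classical
  obtain ⟨hASM, hAI⟩ := hA
  have hIbd : ∀ i ∈ I, 1 ≤ i ∧ i + 1 ≤ n := by
    intro i hiI
    have := hI hiI
    rw [Finset.mem_Icc] at this
    omega
  have hcfact : ∀ a b, 1 ≤ a → a ≤ n → 1 ≤ b → b ≤ n →
      ((rk n A a b).toNat : ℤ) = rk n A a b ∧ (rk n A a b).toNat ≤ a ∧
        (rk n A a b).toNat ≤ b ∧ a + b ≤ n + (rk n A a b).toNat := by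
    intro a b ha1 ha2 hb1 hb2
    have h0 := rkA_nonneg A hASM ha2 hb2
    have h1 := rkA_le_left A hASM ha2 hb2
    have h2 := rkA_le_right A hASM ha2 hb2
    have h3 := rkA_ge A hASM ha2 hb2
    refine ⟨by omega, by omega, by omega, by omega⟩
  have hPeq : ∀ a b, 1 ≤ a → a ≤ n → 1 ≤ b → b ≤ n → ∀ i, i ≤ n → ∀ j, 1 ≤ j → j ≤ n →
      rk n (permMatrix n (P a b)) i j = gP a b (rk n A a b).toNat i j := by
    intro a b ha1 ha2 hb1 hb2
    obtain ⟨hc0, hca, hcb, hcn⟩ := hcfact a b ha1 ha2 hb1 hb2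
    exact rk_P_eq (P a b) a b _ ha1 ha2 hb1 hb2 hca hcb hcn (hP a b ha1 ha2 hb1 hb2)
  have hQeq : ∀ a b, 1 ≤ a → a ≤ n → 1 ≤ b → b ≤ n → ∀ i, i ≤ n → ∀ j, 1 ≤ j → j ≤ n →
      rk n (permMatrix n (Q a b)) i j = gQ n a b (rk n A a b).toNat i j := by
    intro a b ha1 ha2 hb1 hb2
    obtain ⟨hc0, hca, hcb, hcn⟩ := hcfact a b ha1 ha2 hb1 hb2
    exact rk_Q_eq (Q a b) a b _ ha1 ha2 hb1 hb2 hca hcb hcn (hQ a b ha1 ha2 hb1 hb2)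
  have hPIeq : ∀ a b, 1 ≤ a → a ≤ n → 1 ≤ b → b ≤ n → ∀ i, i ∉ I → ∀ j,
      rk n (permMatrix n (PI a b)) i j = rk n (permMatrix n (P a b)) i j := by
    intro a b ha1 ha2 hb1 hb2 i hiI j
    obtain ⟨hmin, v, hv, hPv⟩ := hPI a b ha1 ha2 hb1 hb2
    rw [hPv]
    exact (rk_perm_reindex (PI a b) v i j (snI_preserve v hv hiI)).symm
  have hQIeq : ∀ a b, 1 ≤ a → a ≤ n → 1 ≤ b → b ≤ n → ∀ i, i ∉ I → ∀ j,
      rk n (permMatrix n (QI a b)) i j = rk n (permMatrix n (Q a b)) i j := by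
    intro a b ha1 ha2 hb1 hb2 i hiI j
    obtain ⟨hmin, v, hv, hQv⟩ := hQI a b ha1 ha2 hb1 hb2
    rw [hQv]
    exact (rk_perm_reindex (QI a b) v i j (snI_preserve v hv hiI)).symm
  have hPIcond : ∀ a b, 1 ≤ a → a ≤ n → 1 ≤ b → b ≤ n → ∀ i ∈ I, ∀ j,
      rk n (permMatrix n (PI a b)) i j = rk n (permMatrix n (PI a b)) (i - 1) j + 1 ∨
        rk n (permMatrix n (PI a b)) i j = rk n (permMatrix n (PI a b)) (i + 1) j := by
    intro a b ha1 ha2 hb1 hb2 i hiI j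
    have hb := hIbd i hiI
    exact minRep_cond (PI a b) (hPI a b ha1 ha2 hb1 hb2).1 hiI hb.1 (by omega) j
  have hQIcond : ∀ a b, 1 ≤ a → a ≤ n → 1 ≤ b → b ≤ n → ∀ i ∈ I, ∀ j,
      rk n (permMatrix n (QI a b)) i j = rk n (permMatrix n (QI a b)) (i - 1) j + 1 ∨
        rk n (permMatrix n (QI a b)) i j = rk n (permMatrix n (QI a b)) (i + 1) j := by
    intro a b ha1 ha2 hb1 hb2 i hiI j
    have hb := hIbd i hiI
    exact minRep_cond (QI a b) (hQI a b ha1 ha2 hb1 hb2).1 hiI hb.1 (by omega) j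
  refine ⟨⟨?_, ?_⟩, ?_, ?_⟩
  · -- part 1(a): A is above each PI a b
    intro a b ha1 ha2 hb1 hb2 i j hi1 hi2 hj1 hj2
    by_cases hiI : i ∈ I
    · obtain ⟨a', ha'I, ha'n, hcase⟩ :=
        charI (fun m => rk n (permMatrix n (PI a b)) m j)
          (fun m hm => hPIcond a b ha1 ha2 hb1 hb2 m hm j) hIbd i hiI
      have hPIa' : rk n (permMatrix n (PI a b)) a' j = gP a b (rk n A a b).toNat a' j := by
        rw [hPIeq a b ha1 ha2 hb1 hb2 a' ha'I j, hPeq a b ha1 ha2 hb1 hb2 a' ha'n j hj1 hj2]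
      have hL1 := (L1 A hASM a b ha2 hb2 ha'n hj2).1
      rcases hcase with ⟨hlt, heq⟩ | ⟨hlt, heq⟩
      · have h2 := (rkA_row A hASM (le_of_lt hlt) hi2 hj2).2
        omega
      · have h2 := (rkA_row A hASM (le_of_lt hlt) ha'n hj2).1
        omega
    · rw [hPIeq a b ha1 ha2 hb1 hb2 i hiI j, hPeq a b ha1 ha2 hb1 hb2 i hi2 j hj1 hj2]
      exact (L1 A hASM a b ha2 hb2 hi2 hj2).1
  · -- part 1(b): least upper bound
    intro D hD hle i j hi1 hi2 hj1 hj2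
    have key : ∀ a', 1 ≤ a' → a' ≤ n → a' ∉ I →
        rk n (permMatrix n (PI a' j)) a' j = rk n A a' j := by
      intro a' h1 h2 h3
      obtain ⟨hc0, hca, hcb, hcn⟩ := hcfact a' j h1 h2 hj1 hj2
      rw [hPIeq a' j h1 h2 hj1 hj2 a' h3 j, hPeq a' j h1 h2 hj1 hj2 a' h2 j hj1 hj2]
      simp only [gP]
      omega
    by_cases hiI : i ∈ I
    · obtain ⟨a', ha'I, ha'n, hcase⟩ :=
        charI (fun m => rk n A m j) (fun m hm => hAI m hm j hj1 hj2) hIbd i hiI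
      rcases hcase with ⟨hlt, heq⟩ | ⟨hlt, heq⟩
      · by_cases ha0 : a' = 0
        · subst ha0
          rw [rk_zero_row] at heq
          have hDle := rkA_le_left D hD hi2 hj2
          omega
        · have h1 := key a' (by omega) (by omega) ha'I
          have h2 := hle a' j (by omega) (by omega) hj1 hj2 a' j (by omega) (by omega) hj1 hj2
          have h3 := (rkA_row D hD (le_of_lt hlt) hi2 hj2).2
          omega
      · have h1 := key a' (by omega) ha'n ha'I
        have h2 := hle a' j (by omega) ha'n hj1 hj2 a' j (by omega) ha'n hj1 hj2
        have h3 := (rkA_row D hD (le_of_lt hlt) ha'n hj2).1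
        omega
    · have h1 := key i hi1 hi2 hiI
      have h2 := hle i j hi1 hi2 hj1 hj2 i j hi1 hi2 hj1 hj2
      omega
  · -- part 2(a): A is below each QI a b
    intro a b ha1 ha2 hb1 hb2 i j hi1 hi2 hj1 hj2
    have keyQ : ∀ a', a' ≤ n → a' ∉ I →
        rk n (permMatrix n (QI a b)) a' j ≤ rk n A a' j := by
      intro a' h2 h3
      rw [hQIeq a b ha1 ha2 hb1 hb2 a' h3 j, hQeq a b ha1 ha2 hb1 hb2 a' h2 j hj1 hj2]
      exact (L1 A hASM a b ha2 hb2 h2 hj2).2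
    by_cases hiI : i ∈ I
    · obtain ⟨a', ha'I, ha'n, hcase⟩ :=
        charI (fun m => rk n A m j) (fun m hm => hAI m hm j hj1 hj2) hIbd i hiI
      rcases hcase with ⟨hlt, heq⟩ | ⟨hlt, heq⟩
      · have h1 := keyQ a' (by omega) ha'I
        have h2 := (rk_perm_bounds (QI a b) j (le_of_lt hlt) hi2).2
        omega
      · have h1 := keyQ a' ha'n ha'I
        have h2 := (rk_perm_bounds (QI a b) j (le_of_lt hlt) ha'n).1
        omega
    · exact keyQ i hi2 hiI
  · -- part 2(b): greatest lower bound in ASM^I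
    intro D hD hle i j hi1 hi2 hj1 hj2
    obtain ⟨hc0, hca, hcb, hcn⟩ := hcfact i j hi1 hi2 hj1 hj2
    have h2 := hle i j hi1 hi2 hj1 hj2 i j hi1 hi2 hj1 hj2
    have hsuff : rk n A i j ≤ rk n (permMatrix n (QI i j)) i j := by
      by_cases hiI : i ∈ I
      · obtain ⟨a', ha'I, ha'n, hcase⟩ :=
          charI (fun m => rk n (permMatrix n (QI i j)) m j)
            (fun m hm => hQIcond i j hi1 hi2 hj1 hj2 m hm j) hIbd i hiI
        have hQa' : rk n (permMatrix n (QI i j)) a' j = gQ n i j (rk n A i j).toNat a' j := by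
          rw [hQIeq i j hi1 hi2 hj1 hj2 a' ha'I j, hQeq i j hi1 hi2 hj1 hj2 a' ha'n j hj1 hj2]
        simp only [gQ] at hQa'
        rcases hcase with ⟨hlt, heq⟩ | ⟨hlt, heq⟩ <;> omega
      · rw [hQIeq i j hi1 hi2 hj1 hj2 i hiI j, hQeq i j hi1 hi2 hj1 hj2 i hi2 j hj1 hj2]
        simp only [gQ]
        omega
    omega
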